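/- Let X be a complex manifold of dimension n with a Hermitian metric whose fundamental form F satisfies ∂∂̄F^i = 0 for i = 1,…,k, and let Y ⊂ X be a compact complex submanifold. Then the blow-up Bl_Y(X) admits a Hermitian metric with fundamental form F̃ = σ*F + Nω (for suitable large N > 0 and ω the curvature form of a Hermitian line/vector bundle construction, which is closed and supported near the exceptional divisor) satisfying ∂∂̄F̃^i = 0 for i = 1,…,k. -/
import Mathlib


/-- Let `X` be a complex manifold with a Hermitian metric whose fundamental
form `F` satisfies `∂∂̄ F^i = 0` for `i = 1,…,k`, and let `Y ⊂ X` be a compact complex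
submanifold.  Then the blow-up `Bl_Y(X)` admits a Hermitian metric with fundamental form
`F̃ = σ*F + Nω` (for suitable large `N > 0`, where `ω` is the closed real `(1,1)`
curvature form of the standard line-bundle construction, supported near the exceptional
divisor) satisfying `∂∂̄ F̃^i = 0` for `i = 1,…,k`.
Forms on `X` and on `Bl_Y(X)` are modelled by abstract `ℂ`-algebras `A` and `B`; the
pullback `σ*` by the (holomorphic) blow-down map is an algebra homomorphism commuting
with `∂` and `∂̄`; `pos` is the abstract predicate of being the fundamental form of a
Hermitian metric, and positivity of `σ*F + Nω` for all large `N` (coming from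
compactness of `Y` and the properties of the curvature `ω`) is part of the hypotheses. -/
theorem statement14 (A B : Type*) [Ring A] [Algebra ℂ A] [Ring B] [Algebra ℂ B]
    (HB : ℕ → ℕ → B → Prop)
    (ddA dbarA : A →ₗ[ℂ] A) (dd dbar : B →ₗ[ℂ] B)
    (HBdd : ∀ p q x, HB p q x → HB (p + 1) q (dd x))
    (HBdbar : ∀ p q x, HB p q x → HB p (q + 1) (dbar x))
    (HBmul : ∀ p q r s x y, HB p q x → HB r s y → HB (p + r) (q + s) (x * y))
    (HBsmul : ∀ p q (c : ℂ) x, HB p q x → HB p q (c • x))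
    (leib_dd : ∀ p q x y, HB p q x → dd (x * y) = dd x * y + ((-1 : ℂ)) ^ (p + q) • (x * dd y))
    (leib_dbar : ∀ p q x y, HB p q x → dbar (x * y) = dbar x * y + ((-1 : ℂ)) ^ (p + q) • (x * dbar y))
    (HBcomm : ∀ p q r s x y, HB p q x → HB r s y → Even (p + q) → x * y = y * x)
    -- the pullback by the blow-down map σ : Bl_Y(X) → X, which is holomorphic
    (pull : A →ₐ[ℂ] B)
    (hpull_dd : ∀ x, pull (ddA x) = dd (pull x))
    (hpull_dbar : ∀ x, pull (dbarA x) = dbar (pull x))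
    -- the special Hermitian metric on X
    (k : ℕ) (F : A) (hFB : HB 1 1 (pull F))
    (hFspecial : ∀ i, 1 ≤ i → i ≤ k → ddA (dbarA (F ^ i)) = 0)
    -- the curvature form of the auxiliary Hermitian line bundle on the blow-up:
    -- a closed real (1,1)-form
    (ω : B) (hω : HB 1 1 ω) (hdω : dd ω = 0) (hdbarω : dbar ω = 0)
    -- positivity of σ*F + Nω for N large (Y compact, ω seminegative with support
    -- near the exceptional divisor and negative along its fibres)
    (pos : B → Prop)
    (N₀ : ℝ) (hN₀ : 0 < N₀) (hpos : ∀ N : ℝ, N₀ ≤ N → pos (pull F + (N : ℂ) • ω)) :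
    ∃ N : ℝ, 0 < N ∧ pos (pull F + (N : ℂ) • ω) ∧
      ∀ i, 1 ≤ i → i ≤ k → dd (dbar ((pull F + (N : ℂ) • ω) ^ i)) = 0 := by
  refine ⟨N₀, hN₀, hpos N₀ le_rfl, ?_⟩
  intro i hi1 hik
  set u : B := pull F with hu'
  set v : B := ((N₀ : ℝ) : ℂ) • ω with hv'
  -- u and ω commute (both (1,1)-forms, even total degree), hence u and v commute
  have hcomm : Commute u v := by
    have h := HBcomm 1 1 1 1 u ω hFB hω (by decide)
    simp only [Commute, SemiconjBy, hv', mul_smul_comm, smul_mul_assoc, h]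
  -- powers of ω are dbar- and dd-closed
  have hdbarw : ∀ m : ℕ, dbar (ω ^ (m + 1)) = 0 := by
    intro m
    induction m with
    | zero => simpa using hdbarω
    | succ n ih =>
        rw [pow_succ' ω (n + 1), leib_dbar 1 1 ω (ω ^ (n + 1)) hω, hdbarω, ih]
        simp
  have hddw : ∀ m : ℕ, dd (ω ^ (m + 1)) = 0 := by
    intro m
    induction m with
    | zero => simpa using hdω
    | succ n ih =>
        rw [pow_succ' ω (n + 1), leib_dd 1 1 ω (ω ^ (n + 1)) hω, hdω, ih]
        simp
  have hdbarv : ∀ m : ℕ, dbar (v ^ (m + 1)) = 0 := by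
    intro m
    rw [hv', smul_pow, map_smul, hdbarw, smul_zero]
  have hddv : ∀ m : ℕ, dd (v ^ (m + 1)) = 0 := by
    intro m
    rw [hv', smul_pow, map_smul, hddw, smul_zero]
  -- degrees of powers of u
  have hupow : ∀ j : ℕ, HB (j + 1) (j + 1) (u ^ (j + 1)) := by
    intro j
    induction j with
    | zero => simpa using hFB
    | succ n ih =>
        have h := HBmul 1 1 (n + 1) (n + 1) u (u ^ (n + 1)) hFB ih
        rw [← pow_succ' u (n + 1), show 1 + (n + 1) = n + 1 + 1 from by omega] at h
        exact h
  -- the special metric condition on powers of u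
  have hspec : ∀ j, 1 ≤ j → j ≤ k → dd (dbar (u ^ j)) = 0 := by
    intro j hj1 hjk
    have : u ^ j = pull (F ^ j) := (map_pow pull F j).symm
    rw [this, ← hpull_dbar, ← hpull_dd, hFspecial j hj1 hjk, map_zero]
  -- the key term computation
  have hterm : ∀ j m : ℕ, 1 ≤ j + m → j + m ≤ k → dd (dbar (u ^ j * v ^ m)) = 0 := by
    intro j m hjm1 hjmk
    match j, m with
    | 0, m + 1 =>
        rw [pow_zero, one_mul]
        rw [hdbarv, map_zero]
    | j + 1, 0 =>
        rw [pow_zero, mul_one]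
        exact hspec (j + 1) (by omega) (by omega)
    | j + 1, m + 1 =>
        rw [leib_dbar (j + 1) (j + 1) (u ^ (j + 1)) (v ^ (m + 1)) (hupow j),
          hdbarv, mul_zero, smul_zero, add_zero,
          leib_dd (j + 1) (j + 1 + 1) (dbar (u ^ (j + 1))) (v ^ (m + 1))
            (HBdbar (j + 1) (j + 1) _ (hupow j)),
          hspec (j + 1) (by omega) (by omega), hddv, zero_mul, mul_zero, smul_zero,
          add_zero]
  -- binomial expansion
  rw [hcomm.add_pow]
  rw [map_sum, map_sum]
  refine Finset.sum_eq_zero ?_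
  intro j hj
  have hjle : j ≤ i := Nat.lt_succ_iff.mp (Finset.mem_range.mp hj)
  have hc : u ^ j * v ^ (i - j) * (Nat.choose i j : B)
      = (Nat.choose i j) • (u ^ j * v ^ (i - j)) := by
    rw [(Nat.cast_commute (Nat.choose i j) (u ^ j * v ^ (i - j))).symm.eq,
      nsmul_eq_mul]
  rw [hc, map_nsmul, map_nsmul, hterm j (i - j) (by omega) (by omega), smul_zero]
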